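/- arXiv:1807.09699 — 5 statements merged into one kernel-verified Lean document; each statement's English description precedes it below -/
import Mathlib

section
/- For any symmetric matrices A, B, C, D : ι → ι → ℝ, the contraction of Kulkarni–Nomizu products satisfies [(A⊙B)·(C⊙D)]_{μνλκ} = 2[((A·C)⊙(B·D))_{μνλκ} + ((A·D)⊙(B·C))_{μνλκ}] for all indices μ, ν, λ, κ. -/
open Finset

variable {ι : Type*} [Fintype ι] [DecidableEq ι]

/-- Kulkarni–Nomizu product of two 2-tensors:
`(A⊙B)_{μνλκ} = A_{μλ}B_{νκ} − A_{νλ}B_{μκ} − A_{μκ}B_{νλ} + A_{νκ}B_{μλ}`. -/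
def KN (A B : ι → ι → ℝ) : ι → ι → ι → ι → ℝ :=
  fun μ ν l κ => A μ l * B ν κ - A ν l * B μ κ - A μ κ * B ν l + A ν κ * B μ l

/-- Contraction of two 2-tensors via the inverse metric:
`(A·B)_{μκ} = Σ_{ν,λ} A_{μν}(Ḡ⁻¹)_{νλ}B_{λκ}`. -/
def dot2 (Ginv : ι → ι → ℝ) (A B : ι → ι → ℝ) : ι → ι → ℝ :=
  fun μ κ => ∑ ν, ∑ l, A μ ν * Ginv ν l * B l κ

/-- Contraction of two 4-tensors via the inverse metric:
`(R·S)_{μνλκ} = Σ R_{μνστ}(Ḡ⁻¹)_{σσ'}(Ḡ⁻¹)_{ττ'}S_{σ'τ'λκ}`. -/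
def dot4 (Ginv : ι → ι → ℝ) (R S : ι → ι → ι → ι → ℝ) : ι → ι → ι → ι → ℝ :=
  fun μ ν l κ => ∑ σ, ∑ τ, ∑ σ', ∑ τ', R μ ν σ τ * Ginv σ σ' * Ginv τ τ' * S σ' τ' l κ

/-- Trace of a 2-tensor: `tr A = Σ_{μ,ν} (Ḡ⁻¹)_{μν}A_{νμ}`. -/
def tr2 (Ginv : ι → ι → ℝ) (A : ι → ι → ℝ) : ℝ :=
  ∑ μ, ∑ ν, Ginv μ ν * A ν μ

/-- Partial trace of a 4-tensor: `R_{μν}{}^ν{}_κ = Σ_{ν,ν'} (Ḡ⁻¹)_{νν'} R_{μνν'κ}`. -/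
def ptr4 (Ginv : ι → ι → ℝ) (R : ι → ι → ι → ι → ℝ) : ι → ι → ℝ :=
  fun μ κ => ∑ ν, ∑ ν', Ginv ν ν' * R μ ν ν' κ

/-- Full trace of a 4-tensor: `R_{μν}{}^{μν} = Σ (Ḡ⁻¹)_{μμ'}(Ḡ⁻¹)_{νν'} R_{μνμ'ν'}`. -/
def ftr4 (Ginv : ι → ι → ℝ) (R : ι → ι → ι → ι → ℝ) : ℝ :=
  ∑ μ, ∑ μ', ∑ ν, ∑ ν', Ginv μ μ' * Ginv ν ν' * R μ ν μ' ν'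

/-! The product `A⊙B` is the antisymmetrization of `A_{μσ}B_{ντ}` in `(σ, τ)`, and `C⊙D` that of
`C_{σ'λ}D_{τ'κ} - C_{σ'κ}D_{τ'λ}` in `(σ', τ')`. Swapping both contracted pairs at once leaves the
weights `Ḡ⁻¹_{σσ'}Ḡ⁻¹_{ττ'}` invariant, so one antisymmetrization can be dropped at the cost of the
factor `2`; the eight remaining terms each split into a product of two contractions `X·Y`. -/

omit [Fintype ι] [DecidableEq ι] in
theorem KN_apply_eq_antisymm_right (A B : ι → ι → ℝ) (μ ν σ τ : ι) :
    KN A B μ ν σ τ = (A μ σ * B ν τ - A ν σ * B μ τ) - (A μ τ * B ν σ - A ν τ * B μ σ) := by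
  simp only [KN]
  ring

omit [Fintype ι] [DecidableEq ι] in
theorem KN_apply_eq_antisymm_left (C D : ι → ι → ℝ) (σ τ l κ : ι) :
    KN C D σ τ l κ = (C σ l * D τ κ - C σ κ * D τ l) - (C τ l * D σ κ - C τ κ * D σ l) := by
  simp only [KN]
  ring

omit [DecidableEq ι] in
theorem sum_antisymm_mul_antisymm {R : Type*} [CommRing R] (a g c : ι → ι → R) :
    ∑ σ, ∑ τ, ∑ σ', ∑ τ', (a σ τ - a τ σ) * g σ σ' * g τ τ' * (c σ' τ' - c τ' σ') =
      2 * ∑ σ, ∑ τ, ∑ σ', ∑ τ', a σ τ * g σ σ' * g τ τ' * (c σ' τ' - c τ' σ') := by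
  have swap : ∑ σ, ∑ τ, ∑ σ', ∑ τ', a τ σ * g σ σ' * g τ τ' * (c σ' τ' - c τ' σ') =
      -∑ σ, ∑ τ, ∑ σ', ∑ τ', a σ τ * g σ σ' * g τ τ' * (c σ' τ' - c τ' σ') := by
    rw [Finset.sum_comm]
    simp only [← Finset.sum_neg_distrib]
    refine Finset.sum_congr rfl fun σ _ => Finset.sum_congr rfl fun τ _ => ?_
    rw [Finset.sum_comm]
    exact Finset.sum_congr rfl fun σ' _ => Finset.sum_congr rfl fun τ' _ => by ring
  simp only [sub_mul, Finset.sum_sub_distrib, swap]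
  ring

omit [DecidableEq ι] in
theorem sum_mul_eq_dot2_mul_dot2 (Ginv X Y Z W : ι → ι → ℝ) (a b c d : ι) :
    ∑ σ, ∑ τ, ∑ σ', ∑ τ', (X a σ * Ginv σ σ' * Z σ' c) * (Y b τ * Ginv τ τ' * W τ' d) =
      dot2 Ginv X Z a c * dot2 Ginv Y W b d := by
  simp only [dot2, Finset.sum_mul_sum]

theorem kn_dot_kn_general (Ginv : ι → ι → ℝ) (A B C D : ι → ι → ℝ) :
    ∀ μ ν l κ,
      dot4 Ginv (KN A B) (KN C D) μ ν l κ =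
        2 * (KN (dot2 Ginv A C) (dot2 Ginv B D) μ ν l κ
          + KN (dot2 Ginv A D) (dot2 Ginv B C) μ ν l κ) := by
  intro μ ν l κ
  simp only [dot4, KN_apply_eq_antisymm_right A B μ ν, KN_apply_eq_antisymm_left C D _ _ l κ,
    sum_antisymm_mul_antisymm]
  have expand : ∀ σ τ σ' τ',
      (A μ σ * B ν τ - A ν σ * B μ τ) * Ginv σ σ' * Ginv τ τ' *
          ((C σ' l * D τ' κ - C σ' κ * D τ' l) - (C τ' l * D σ' κ - C τ' κ * D σ' l)) =
        ((A μ σ * Ginv σ σ' * C σ' l) * (B ν τ * Ginv τ τ' * D τ' κ)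
          - (A ν σ * Ginv σ σ' * C σ' l) * (B μ τ * Ginv τ τ' * D τ' κ)
          - (A μ σ * Ginv σ σ' * C σ' κ) * (B ν τ * Ginv τ τ' * D τ' l)
          + (A ν σ * Ginv σ σ' * C σ' κ) * (B μ τ * Ginv τ τ' * D τ' l))
        + ((A μ σ * Ginv σ σ' * D σ' l) * (B ν τ * Ginv τ τ' * C τ' κ)
          - (A ν σ * Ginv σ σ' * D σ' l) * (B μ τ * Ginv τ τ' * C τ' κ)
          - (A μ σ * Ginv σ σ' * D σ' κ) * (B ν τ * Ginv τ τ' * C τ' l)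
          + (A ν σ * Ginv σ σ' * D σ' κ) * (B μ τ * Ginv τ τ' * C τ' l)) :=
    fun _ _ _ _ => by ring
  simp only [expand, Finset.sum_add_distrib, Finset.sum_sub_distrib, sum_mul_eq_dot2_mul_dot2, KN]

/-- For symmetric matrices `A, B, C, D`, the contraction of
Kulkarni–Nomizu products satisfies
`[(A⊙B)·(C⊙D)]_{μνλκ} = 2[((A·C)⊙(B·D)) + ((A·D)⊙(B·C))]_{μνλκ}`. -/
theorem kn_dot_kn {n : ℕ} (hcard : Fintype.card ι = n)
    (Gbar Ginv : ι → ι → ℝ)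
    (hGsymm : ∀ μ ν, Gbar μ ν = Gbar ν μ)
    (hGinv : ∀ μ l, ∑ ν, Gbar μ ν * Ginv ν l = if μ = l then (1 : ℝ) else 0)
    (A B C D : ι → ι → ℝ)
    (hA : ∀ μ ν, A μ ν = A ν μ) (hB : ∀ μ ν, B μ ν = B ν μ)
    (hC : ∀ μ ν, C μ ν = C ν μ) (hD : ∀ μ ν, D μ ν = D ν μ) :
    ∀ μ ν l κ,
      dot4 Ginv (KN A B) (KN C D) μ ν l κ =
        2 * (KN (dot2 Ginv A C) (dot2 Ginv B D) μ ν l κ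
          + KN (dot2 Ginv A D) (dot2 Ginv B C) μ ν l κ) :=
  kn_dot_kn_general Ginv A B C D
end

section
/- Under the projector hypotheses, the 4-tensor T = ρ[((n−2)(n−3)/2)(g⊙g) + (P⊙P) − (n−3)(g⊙P)] satisfies T·T = ρ²[(n−2)²(n−3)²(g⊙g) + 4(P⊙P) + 2(n−3)²(g⊙P)]. -/
/-!
Contracting two Kulkarni–Nomizu products gives
`(A⊙B)·(C⊙D) = 2[(A·C)⊙(B·D) + (A·D)⊙(B·C)]`. Because `Ḡ⁻¹` is symmetric, `P·g` is the transpose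
of `g·P = 0`, so `g` and `P` are orthogonal idempotents: every mixed product of the three blocks
of `T` vanishes, while `(g⊙g)·(g⊙g) = 4 g⊙g`, `(P⊙P)·(P⊙P) = 4 P⊙P` and `(g⊙P)·(g⊙P) = 2 g⊙P`.
Bilinearity of the contraction then gives `T·T`.
-/

open Finset

variable {ι : Type*} [Fintype ι] [DecidableEq ι]

/-- The curvature 4-tensor of a generalized Schwarzschild–Tangherlini geometry,
`T = ρ[((n−2)(n−3)/2)(g⊙g) + (P⊙P) − (n−3)(g⊙P)]`. -/
noncomputable def Tgst (n : ℕ) (ρ : ℝ) (g P : ι → ι → ℝ) : ι → ι → ι → ι → ℝ :=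
  fun μ ν l κ => ρ * (((n : ℝ) - 2) * ((n : ℝ) - 3) / 2 * KN g g μ ν l κ
    + KN P P μ ν l κ - ((n : ℝ) - 3) * KN g P μ ν l κ)


theorem Matrix.IsSymm.of_mul_eq_one {n R : Type*} [Fintype n] [DecidableEq n] [CommRing R]
    {G H : Matrix n n R} (hG : G.IsSymm) (hGH : G * H = 1) : H.IsSymm := by
  rw [← Matrix.inv_eq_right_inv hGH]
  exact hG.inv

section

variable {ι : Type*}

theorem KN_zero_left (B : ι → ι → ℝ) : KN 0 B = 0 := by
  funext μ ν l κ
  simp [KN]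

theorem KN_zero_right (A : ι → ι → ℝ) : KN A 0 = 0 := by
  funext μ ν l κ
  simp [KN]

theorem Tgst_eq_smul (n : ℕ) (ρ : ℝ) (g P : ι → ι → ℝ) :
    Tgst n ρ g P = ρ • ((((n : ℝ) - 2) * ((n : ℝ) - 3) / 2) • KN g g + KN P P
      - ((n : ℝ) - 3) • KN g P) := rfl

variable [Fintype ι]

theorem dot2_apply_comm {G A B : ι → ι → ℝ}
    (hG : ∀ μ ν, G μ ν = G ν μ) (hA : ∀ μ ν, A μ ν = A ν μ) (hB : ∀ μ ν, B μ ν = B ν μ)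
    (μ κ : ι) : dot2 G A B μ κ = dot2 G B A κ μ := by
  simp only [dot2]
  rw [sum_comm]
  refine sum_congr rfl fun ν _ => sum_congr rfl fun l _ => ?_
  rw [hA, hB, hG]
  ring

def dot4Bilin (G : ι → ι → ℝ) :
    (ι → ι → ι → ι → ℝ) →ₗ[ℝ] (ι → ι → ι → ι → ℝ) →ₗ[ℝ] (ι → ι → ι → ι → ℝ) :=
  LinearMap.mk₂ ℝ (dot4 G)
    (fun R R' S => by funext μ ν l κ; simp [dot4, add_mul, sum_add_distrib])
    (fun c R S => by funext μ ν l κ; simp [dot4, mul_sum, mul_assoc])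
    (fun R S S' => by funext μ ν l κ; simp [dot4, mul_add, sum_add_distrib])
    (fun c R S => by funext μ ν l κ; simp [dot4, mul_sum, mul_left_comm])

theorem dot4Bilin_apply (G : ι → ι → ℝ) (R S : ι → ι → ι → ι → ℝ) :
    dot4Bilin G R S = dot4 G R S := rfl

theorem dot4_KN_KN (G A B C D : ι → ι → ℝ) :
    dot4 G (KN A B) (KN C D) =
      (2 : ℝ) • (KN (dot2 G A C) (dot2 G B D) + KN (dot2 G A D) (dot2 G B C)) := by
  funext μ ν l κ
  -- the antisymmetry of `KN C D` in its first two slots pairs the 16 terms into two equal halves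
  set F : ι → ι → ι → ι → ℝ := fun σ τ σ' τ' =>
    (A μ σ * B ν τ - A ν σ * B μ τ) * G σ σ' * G τ τ' * KN C D σ' τ' l κ
  have h_split : dot4 G (KN A B) (KN C D) μ ν l κ
      = ∑ σ, ∑ τ, ∑ σ', ∑ τ', (F σ τ σ' τ' + F τ σ τ' σ') := by
    refine sum_congr rfl fun σ _ => sum_congr rfl fun τ _ =>
      sum_congr rfl fun σ' _ => sum_congr rfl fun τ' _ => ?_
    simp only [F, KN]
    ring
  have h_swap : ∑ σ, ∑ τ, ∑ σ', ∑ τ', F τ σ τ' σ' = ∑ σ, ∑ τ, ∑ σ', ∑ τ', F σ τ σ' τ' := by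
    rw [sum_comm]
    exact sum_congr rfl fun τ _ => sum_congr rfl fun σ _ => sum_comm
  have h_half : ∑ σ, ∑ τ, ∑ σ', ∑ τ', F σ τ σ' τ'
      = KN (dot2 G A C) (dot2 G B D) μ ν l κ + KN (dot2 G A D) (dot2 G B C) μ ν l κ := by
    simp only [F, KN, dot2, sum_mul_sum, ← sum_add_distrib, ← sum_sub_distrib]
    refine sum_congr rfl fun σ _ => sum_congr rfl fun τ _ =>
      sum_congr rfl fun σ' _ => sum_congr rfl fun τ' _ => by ring
  simp only [sum_add_distrib] at h_split
  rw [h_split, h_swap, h_half]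
  simp only [Pi.smul_apply, Pi.add_apply, smul_eq_mul]
  ring

theorem dot4_Tgst_Tgst {G g P : ι → ι → ℝ} (n : ℕ) (ρ : ℝ)
    (hgg : dot2 G g g = g) (hPP : dot2 G P P = P) (hgP : dot2 G g P = 0)
    (hPg : dot2 G P g = 0) :
    dot4 G (Tgst n ρ g P) (Tgst n ρ g P) =
      ρ ^ 2 • ((((n : ℝ) - 2) ^ 2 * ((n : ℝ) - 3) ^ 2) • KN g g + (4 : ℝ) • KN P P
        + (2 * ((n : ℝ) - 3) ^ 2) • KN g P) := by
  simp only [← dot4Bilin_apply, Tgst_eq_smul, map_add, map_sub, map_smul, LinearMap.add_apply,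
    LinearMap.sub_apply, LinearMap.smul_apply]
  simp only [dot4Bilin_apply, dot4_KN_KN, hgg, hPP, hgP, hPg, KN_zero_left, KN_zero_right]
  module

end

theorem Tgst_dot_Tgst_general {n : ℕ}
    (Gbar Ginv g P : ι → ι → ℝ) (ρ : ℝ)
    (hGsymm : ∀ μ ν, Gbar μ ν = Gbar ν μ)
    (hGinv : ∀ μ l, ∑ ν, Gbar μ ν * Ginv ν l = if μ = l then (1 : ℝ) else 0)
    (hgsymm : ∀ μ ν, g μ ν = g ν μ) (hPsymm : ∀ μ ν, P μ ν = P ν μ)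
    (hgg : ∀ μ ν, dot2 Ginv g g μ ν = g μ ν)
    (hPP : ∀ μ ν, dot2 Ginv P P μ ν = P μ ν)
    (hgP : ∀ μ ν, dot2 Ginv g P μ ν = 0)
    :
    ∀ μ ν l κ,
      dot4 Ginv (Tgst n ρ g P) (Tgst n ρ g P) μ ν l κ =
        ρ ^ 2 * (((n : ℝ) - 2) ^ 2 * ((n : ℝ) - 3) ^ 2 * KN g g μ ν l κ
          + 4 * KN P P μ ν l κ + 2 * ((n : ℝ) - 3) ^ 2 * KN g P μ ν l κ) := by
  have hGbar_symm : (Matrix.of Gbar).IsSymm := Matrix.IsSymm.ext fun μ ν => hGsymm ν μ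
  have hGinv_symm : (Matrix.of Ginv).IsSymm := hGbar_symm.of_mul_eq_one <|
    Matrix.ext fun μ l => by simpa [Matrix.mul_apply, Matrix.one_apply] using hGinv μ l
  have hPg : dot2 Ginv P g = 0 := by
    funext μ κ
    rw [dot2_apply_comm (G := Ginv) (fun μ ν => hGinv_symm.apply ν μ) hPsymm hgsymm, hgP]
    rfl
  intro μ ν l κ
  rw [dot4_Tgst_Tgst n ρ (funext₂ hgg) (funext₂ hPP) (funext₂ hgP) hPg]
  rfl

/-- Under the projector hypotheses,
`T·T = ρ²[(n−2)²(n−3)²(g⊙g) + 4(P⊙P) + 2(n−3)²(g⊙P)]`. -/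
theorem Tgst_dot_Tgst {n : ℕ} (hn : 4 ≤ n) (hcard : Fintype.card ι = n)
    (Gbar Ginv g P : ι → ι → ℝ) (ρ : ℝ)
    (hGsymm : ∀ μ ν, Gbar μ ν = Gbar ν μ)
    (hGinv : ∀ μ l, ∑ ν, Gbar μ ν * Ginv ν l = if μ = l then (1 : ℝ) else 0)
    (hsplit : ∀ μ ν, Gbar μ ν = g μ ν + P μ ν)
    (hgsymm : ∀ μ ν, g μ ν = g ν μ) (hPsymm : ∀ μ ν, P μ ν = P ν μ)
    (hgg : ∀ μ ν, dot2 Ginv g g μ ν = g μ ν)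
    (hPP : ∀ μ ν, dot2 Ginv P P μ ν = P μ ν)
    (hgP : ∀ μ ν, dot2 Ginv g P μ ν = 0)
    (htrg : tr2 Ginv g = 2)
    (htrP : tr2 Ginv P = (n : ℝ) - 2)
    :
    ∀ μ ν l κ,
      dot4 Ginv (Tgst n ρ g P) (Tgst n ρ g P) μ ν l κ =
        ρ ^ 2 * (((n : ℝ) - 2) ^ 2 * ((n : ℝ) - 3) ^ 2 * KN g g μ ν l κ
          + 4 * KN P P μ ν l κ + 2 * ((n : ℝ) - 3) ^ 2 * KN g P μ ν l κ) :=
  Tgst_dot_Tgst_general Gbar Ginv g P ρ hGsymm hGinv hgsymm hPsymm hgg hPP hgP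
end

section
/- Under the projector hypotheses with ρ ≠ 0, let ℓ : ι → ℝ be a vector with Σ_ν P_{μν}ℓ^ν = 0 for all μ, write ℓ_μ := Σ_ν Ḡ_{μν}ℓ^ν and ℓ² := Σ_{μ,ν} ℓ^μ Ḡ_{μν} ℓ^ν, and assume ℓ² ≠ 0. Then the projector P can be recovered from T = ρ[((n−2)(n−3)/2)(g⊙g) + (P⊙P) − (n−3)(g⊙P)] by the formula P_{λκ} = −(1/((n−1)(n−3)·ρ·ℓ²)) · Σ_{μ,ν} [T_{μλνκ} − ((n−2)(n−3)/2)·ρ·(Ḡ⊙Ḡ)_{μλνκ}] ℓ^μ ℓ^ν, for all indices λ, κ. -/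
open Finset

variable {ι : Type*} [Fintype ι] [DecidableEq ι]

/-! With `Ḡ = g + P` and `c = (n-2)(n-3)/2`, the Kulkarni–Nomizu product is bilinear and symmetric, so
`T - c ρ Ḡ⊙Ḡ = ρ [(1 - c) P⊙P - (n-1)(n-3) g⊙P]`. Contracting `(A⊙P)_{μλνκ}` with `ℓ^μ ℓ^ν` leaves
only `(ℓ·A·ℓ) P_{λκ}` once `P ℓ = 0 = ℓ P`; hence the `P⊙P` term vanishes, the `g⊙P` term gives
`-(n-1)(n-3) ρ (ℓ·g·ℓ) P_{λκ}`, and `ℓ·g·ℓ = ℓ·Ḡ·ℓ = ℓ²`. -/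

variable {α : Type*}

theorem KN_self_eq_of_eq_add {Gbar g P : α → α → ℝ} (hsplit : ∀ μ ν, Gbar μ ν = g μ ν + P μ ν)
    (μ ν l κ : α) :
    KN Gbar Gbar μ ν l κ = KN g g μ ν l κ + 2 * KN g P μ ν l κ + KN P P μ ν l κ := by
  simp only [KN, hsplit]
  ring

theorem Tgst_sub_KN_self_eq {Gbar g P : α → α → ℝ} (hsplit : ∀ μ ν, Gbar μ ν = g μ ν + P μ ν)
    (n : ℕ) (ρ : ℝ) (μ ν l κ : α) :
    Tgst n ρ g P μ ν l κ - ((n : ℝ) - 2) * ((n : ℝ) - 3) / 2 * ρ * KN Gbar Gbar μ ν l κ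
      = ρ * (1 - ((n : ℝ) - 2) * ((n : ℝ) - 3) / 2) * KN P P μ ν l κ
        - ρ * (((n : ℝ) - 1) * ((n : ℝ) - 3)) * KN g P μ ν l κ := by
  rw [KN_self_eq_of_eq_add hsplit, Tgst]
  ring

variable [Fintype α]

theorem sum_KN_mul_mul_of_annihilates (A P : α → α → ℝ) {ℓ : α → ℝ}
    (hPℓ : ∀ μ, ∑ ν, P μ ν * ℓ ν = 0) (hℓP : ∀ κ, ∑ μ, ℓ μ * P μ κ = 0) (l κ : α) :
    ∑ μ, ∑ ν, KN A P μ l ν κ * ℓ μ * ℓ ν = (∑ μ, ∑ ν, ℓ μ * A μ ν * ℓ ν) * P l κ := by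
  have hterm : ∀ μ ν, KN A P μ l ν κ * ℓ μ * ℓ ν
      = ℓ μ * A μ ν * ℓ ν * P l κ - A l ν * ℓ ν * (ℓ μ * P μ κ)
        - ℓ μ * A μ κ * (P l ν * ℓ ν) + A l κ * ℓ μ * (P μ ν * ℓ ν) := by
    intro μ ν
    simp only [KN]
    ring
  simp only [hterm, sum_add_distrib, sum_sub_distrib, ← mul_sum, ← sum_mul, hPℓ, hℓP]
  ring

theorem sum_sum_mul_mul_eq_zero_of_annihilates {P : α → α → ℝ} {ℓ : α → ℝ}
    (hPℓ : ∀ μ, ∑ ν, P μ ν * ℓ ν = 0) : ∑ μ, ∑ ν, ℓ μ * P μ ν * ℓ ν = 0 := by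
  simp only [mul_assoc, ← mul_sum, hPℓ, mul_zero, sum_const_zero]

theorem sum_Tgst_sub_KN_mul_mul {Gbar g P : α → α → ℝ} {ℓ : α → ℝ}
    (hsplit : ∀ μ ν, Gbar μ ν = g μ ν + P μ ν)
    (hPℓ : ∀ μ, ∑ ν, P μ ν * ℓ ν = 0) (hℓP : ∀ κ, ∑ μ, ℓ μ * P μ κ = 0)
    (n : ℕ) (ρ : ℝ) (l κ : α) :
    ∑ μ, ∑ ν, (Tgst n ρ g P μ l ν κ
        - ((n : ℝ) - 2) * ((n : ℝ) - 3) / 2 * ρ * KN Gbar Gbar μ l ν κ) * ℓ μ * ℓ ν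
      = -(((n : ℝ) - 1) * ((n : ℝ) - 3) * ρ * ∑ μ, ∑ ν, ℓ μ * g μ ν * ℓ ν) * P l κ := by
  have hterm : ∀ μ ν, (Tgst n ρ g P μ l ν κ
        - ((n : ℝ) - 2) * ((n : ℝ) - 3) / 2 * ρ * KN Gbar Gbar μ l ν κ) * ℓ μ * ℓ ν
      = ρ * (1 - ((n : ℝ) - 2) * ((n : ℝ) - 3) / 2) * (KN P P μ l ν κ * ℓ μ * ℓ ν)
        - ρ * (((n : ℝ) - 1) * ((n : ℝ) - 3)) * (KN g P μ l ν κ * ℓ μ * ℓ ν) := by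
    intro μ ν
    rw [Tgst_sub_KN_self_eq hsplit]
    ring
  simp only [hterm, sum_sub_distrib, ← mul_sum, sum_KN_mul_mul_of_annihilates _ P hPℓ hℓP,
    sum_sum_mul_mul_eq_zero_of_annihilates hPℓ]
  ring

theorem projector_recovery_4d_general {n : ℕ} (hn : 4 ≤ n)
    (Gbar g P : ι → ι → ℝ) (ρ : ℝ)
    (hsplit : ∀ μ ν, Gbar μ ν = g μ ν + P μ ν)
    (hPsymm : ∀ μ ν, P μ ν = P ν μ)
    (hρ : ρ ≠ 0)
    (ℓ : ι → ℝ)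
    (hPℓ : ∀ μ, ∑ ν, P μ ν * ℓ ν = 0)
    (hℓsq : ∑ μ, ∑ ν, ℓ μ * Gbar μ ν * ℓ ν ≠ 0) :
    ∀ l κ,
      P l κ =
        -(1 / (((n : ℝ) - 1) * ((n : ℝ) - 3) * ρ
            * (∑ μ, ∑ ν, ℓ μ * Gbar μ ν * ℓ ν)))
          * ∑ μ, ∑ ν,
              (Tgst n ρ g P μ l ν κ
                - ((n : ℝ) - 2) * ((n : ℝ) - 3) / 2 * ρ * KN Gbar Gbar μ l ν κ)
                * ℓ μ * ℓ ν := by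
  intro l κ
  have hn' : (4 : ℝ) ≤ n := by exact_mod_cast hn
  have hℓP : ∀ κ, ∑ μ, ℓ μ * P μ κ = 0 := fun κ => by
    simpa only [hPsymm _ κ, mul_comm] using hPℓ κ
  have hℓgℓ : ∑ μ, ∑ ν, ℓ μ * g μ ν * ℓ ν = ∑ μ, ∑ ν, ℓ μ * Gbar μ ν * ℓ ν := by
    simp only [hsplit, mul_add, add_mul, sum_add_distrib,
      sum_sum_mul_mul_eq_zero_of_annihilates hPℓ, add_zero]
  rw [sum_Tgst_sub_KN_mul_mul hsplit hPℓ hℓP, hℓgℓ]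
  field_simp [show ((n : ℝ) - 1) ≠ 0 by linarith, show ((n : ℝ) - 3) ≠ 0 by linarith]

/-- Under the projector hypotheses with `ρ ≠ 0`, for a vector `ℓ`
annihilated by `P` with `ℓ² ≠ 0`, the projector can be recovered as
`P_{λκ} = −(1/((n−1)(n−3)ρℓ²)) Σ_{μ,ν} [T_{μλνκ} − ((n−2)(n−3)/2)ρ(Ḡ⊙Ḡ)_{μλνκ}] ℓ^μ ℓ^ν`. -/
theorem projector_recovery_4d {n : ℕ} (hn : 4 ≤ n) (hcard : Fintype.card ι = n)
    (Gbar Ginv g P : ι → ι → ℝ) (ρ : ℝ)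
    (hGsymm : ∀ μ ν, Gbar μ ν = Gbar ν μ)
    (hGinv : ∀ μ l, ∑ ν, Gbar μ ν * Ginv ν l = if μ = l then (1 : ℝ) else 0)
    (hsplit : ∀ μ ν, Gbar μ ν = g μ ν + P μ ν)
    (hgsymm : ∀ μ ν, g μ ν = g ν μ) (hPsymm : ∀ μ ν, P μ ν = P ν μ)
    (hgg : ∀ μ ν, dot2 Ginv g g μ ν = g μ ν)
    (hPP : ∀ μ ν, dot2 Ginv P P μ ν = P μ ν)
    (hgP : ∀ μ ν, dot2 Ginv g P μ ν = 0)
    (htrg : tr2 Ginv g = 2)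
    (htrP : tr2 Ginv P = (n : ℝ) - 2)
    (hρ : ρ ≠ 0)
    (ℓ : ι → ℝ)
    (hPℓ : ∀ μ, ∑ ν, P μ ν * ℓ ν = 0)
    (hℓsq : ∑ μ, ∑ ν, ℓ μ * Gbar μ ν * ℓ ν ≠ 0) :
    ∀ l κ,
      P l κ =
        -(1 / (((n : ℝ) - 1) * ((n : ℝ) - 3) * ρ
            * (∑ μ, ∑ ν, ℓ μ * Gbar μ ν * ℓ ν)))
          * ∑ μ, ∑ ν,
              (Tgst n ρ g P μ l ν κ
                - ((n : ℝ) - 2) * ((n : ℝ) - 3) / 2 * ρ * KN Gbar Gbar μ l ν κ)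
                * ℓ μ * ℓ ν :=
  projector_recovery_4d_general hn Gbar g P ρ hsplit hPsymm hρ ℓ hPℓ hℓsq
end

section
/- Under the projector hypotheses, the 4-tensor T = ρ[((n−2)(n−3)/2)(g⊙g) + (P⊙P) − (n−3)(g⊙P)] has vanishing partial trace: T_{μν}{}^ν{}_κ = 0 for all indices μ, κ (this is the algebraic form of the statement that the generalized Schwarzschild–Tangherlini curvature satisfies the Λ-vacuum Einstein equations). -/
open Finset

variable {ι : Type*} [Fintype ι] [DecidableEq ι]

/-!
The partial trace of a Kulkarni–Nomizu product of symmetric tensors is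
`A·B + B·A − (tr A) B − (tr B) A`. For the complementary projectors `g`, `P` this gives
`tr(g⊙g) = −2g`, `tr(P⊙P) = −2(n−3)P` and `tr(g⊙P) = −2P − (n−2)g`, and the coefficients
of `T` are chosen exactly so that these cancel. The inverse metric is symmetric because `Ḡ` is.
-/

theorem symm_of_mul_eq_one {Gbar Ginv : ι → ι → ℝ} (hGsymm : ∀ μ ν, Gbar μ ν = Gbar ν μ)
    (hGinv : ∀ μ l, ∑ ν, Gbar μ ν * Ginv ν l = if μ = l then (1 : ℝ) else 0) :
    ∀ μ ν, Ginv μ ν = Ginv ν μ := by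
  have hmul : Matrix.of Gbar * Matrix.of Ginv = 1 := by
    ext μ l
    simpa [Matrix.mul_apply, Matrix.one_apply] using hGinv μ l
  have hsymm : (Matrix.of Gbar).IsSymm := Matrix.IsSymm.ext fun μ ν => hGsymm ν μ
  intro μ ν
  simpa [Matrix.inv_eq_right_inv hmul] using hsymm.inv.apply ν μ

omit [DecidableEq ι] in
theorem dot2_eq_sum {Ginv : ι → ι → ℝ} (hG : ∀ μ ν, Ginv μ ν = Ginv ν μ)
    (A B : ι → ι → ℝ) (μ κ : ι) :
    dot2 Ginv A B μ κ = ∑ ν, ∑ ν', Ginv ν ν' * (A μ ν' * B ν κ) := by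
  rw [dot2, sum_comm]
  refine sum_congr rfl fun ν _ => sum_congr rfl fun ν' _ => ?_
  rw [hG]; ring

omit [DecidableEq ι] in
theorem dot2_swap {Ginv A B : ι → ι → ℝ} (hG : ∀ μ ν, Ginv μ ν = Ginv ν μ)
    (hA : ∀ μ ν, A μ ν = A ν μ) (hB : ∀ μ ν, B μ ν = B ν μ) (μ κ : ι) :
    dot2 Ginv B A μ κ = dot2 Ginv A B κ μ := by
  rw [dot2_eq_sum hG, dot2]
  refine sum_congr rfl fun ν _ => sum_congr rfl fun ν' _ => ?_
  rw [hA, hB]; ring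

omit [DecidableEq ι] in
theorem tr2_mul_eq_sum (Ginv : ι → ι → ℝ) {A : ι → ι → ℝ} (hA : ∀ μ ν, A μ ν = A ν μ)
    (c : ℝ) : tr2 Ginv A * c = ∑ ν, ∑ ν', Ginv ν ν' * (A ν ν' * c) := by
  simp only [tr2, sum_mul]
  refine sum_congr rfl fun ν _ => sum_congr rfl fun ν' _ => ?_
  rw [hA]; ring

omit [DecidableEq ι] in
theorem ptr4_KN {Ginv A B : ι → ι → ℝ} (hG : ∀ μ ν, Ginv μ ν = Ginv ν μ)
    (hA : ∀ μ ν, A μ ν = A ν μ) (hB : ∀ μ ν, B μ ν = B ν μ) (μ κ : ι) :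
    ptr4 Ginv (KN A B) μ κ = dot2 Ginv A B μ κ + dot2 Ginv B A μ κ
      - tr2 Ginv A * B μ κ - tr2 Ginv B * A μ κ := by
  simp only [dot2_eq_sum hG, tr2_mul_eq_sum Ginv hA, tr2_mul_eq_sum Ginv hB, ptr4, KN,
    ← sum_add_distrib, ← sum_sub_distrib]
  refine sum_congr rfl fun ν _ => sum_congr rfl fun ν' _ => ?_
  ring

omit [DecidableEq ι] in
theorem ptr4_Tgst (n : ℕ) (ρ : ℝ) (Ginv g P : ι → ι → ℝ) (μ κ : ι) :
    ptr4 Ginv (Tgst n ρ g P) μ κ =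
      ρ * (((n : ℝ) - 2) * ((n : ℝ) - 3) / 2 * ptr4 Ginv (KN g g) μ κ
        + ptr4 Ginv (KN P P) μ κ - ((n : ℝ) - 3) * ptr4 Ginv (KN g P) μ κ) := by
  simp only [ptr4, Tgst, mul_sum, ← sum_add_distrib, ← sum_sub_distrib]
  refine sum_congr rfl fun ν _ => sum_congr rfl fun ν' _ => ?_
  ring

theorem Tgst_traceless_general {n : ℕ}
    (Gbar Ginv g P : ι → ι → ℝ) (ρ : ℝ)
    (hGsymm : ∀ μ ν, Gbar μ ν = Gbar ν μ)
    (hGinv : ∀ μ l, ∑ ν, Gbar μ ν * Ginv ν l = if μ = l then (1 : ℝ) else 0)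
    (hgsymm : ∀ μ ν, g μ ν = g ν μ) (hPsymm : ∀ μ ν, P μ ν = P ν μ)
    (hgg : ∀ μ ν, dot2 Ginv g g μ ν = g μ ν)
    (hPP : ∀ μ ν, dot2 Ginv P P μ ν = P μ ν)
    (hgP : ∀ μ ν, dot2 Ginv g P μ ν = 0)
    (htrg : tr2 Ginv g = 2)
    (htrP : tr2 Ginv P = (n : ℝ) - 2)
    :
    ∀ μ κ, ptr4 Ginv (Tgst n ρ g P) μ κ = 0 := by
  have hG := symm_of_mul_eq_one hGsymm hGinv
  intro μ κ
  rw [ptr4_Tgst, ptr4_KN hG hgsymm hgsymm, ptr4_KN hG hPsymm hPsymm, ptr4_KN hG hgsymm hPsymm,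
    dot2_swap hG hgsymm hPsymm, hgg, hPP, hgP, hgP, htrg, htrP]
  ring

/-- Under the projector hypotheses, the gST curvature tensor `T`
has vanishing partial trace: `T_{μν}{}^ν{}_κ = 0` (the algebraic form of the
Λ-vacuum Einstein equations). -/
theorem Tgst_traceless {n : ℕ} (hn : 4 ≤ n) (hcard : Fintype.card ι = n)
    (Gbar Ginv g P : ι → ι → ℝ) (ρ : ℝ)
    (hGsymm : ∀ μ ν, Gbar μ ν = Gbar ν μ)
    (hGinv : ∀ μ l, ∑ ν, Gbar μ ν * Ginv ν l = if μ = l then (1 : ℝ) else 0)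
    (hsplit : ∀ μ ν, Gbar μ ν = g μ ν + P μ ν)
    (hgsymm : ∀ μ ν, g μ ν = g ν μ) (hPsymm : ∀ μ ν, P μ ν = P ν μ)
    (hgg : ∀ μ ν, dot2 Ginv g g μ ν = g μ ν)
    (hPP : ∀ μ ν, dot2 Ginv P P μ ν = P μ ν)
    (hgP : ∀ μ ν, dot2 Ginv g P μ ν = 0)
    (htrg : tr2 Ginv g = 2)
    (htrP : tr2 Ginv P = (n : ℝ) - 2)
    :
    ∀ μ κ, ptr4 Ginv (Tgst n ρ g P) μ κ = 0 :=
  Tgst_traceless_general Gbar Ginv g P ρ hGsymm hGinv hgsymm hPsymm hgg hPP hgP htrg htrP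
end

section
/- Let r_H ∈ ℝ, b > r_H, let k ≥ 2 be a natural number, μ ≠ 0 and C ≠ 0 real constants. Suppose f(s) = (s − r_H)^k · g(s) on [r_H, b), where g : [r_H, b) → ℝ is continuous with g(r_H) = C, and f is nowhere zero on (r_H, b). Let u : (r_H, b) → (0, ∞) be differentiable with f(s)·u'(s) = μ·u(s) for all s ∈ (r_H, b). Then lim_{s → r_H⁺} (s − r_H)^{k−1} · log u(s) = −μ/(C(k−1)); in particular this limit is nonzero, so log u blows up like a negative power of (s − r_H) and u behaves like exp(D/(s − r_H)^{k−1}) with D = −μ/(C(k−1)). -/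
/-! Put `m = k - 1`. The equation gives `(log u)' = μ / f`, so
`(s - r_H)^(m+1) (log u)'(s) = μ / g(s) → μ / C`. If `(s - a)^(m+1) F'(s) ≤ c` near `a⁺`, then
`F + c / (m (s - a)^m)` is antitone there, hence bounded below near `a` by its value at a fixed point;
multiplying by `(s - a)^m` gives `liminf (s - a)^m F(s) ≥ -c/m`. Letting `c` decrease to the limit
`L` of `(s - a)^(m+1) F'(s)`, and arguing symmetrically for `-F`, yields `(s - a)^m F(s) → -L/m`. -/

open Set Filter Topology

section

variable {a c l L : ℝ} {m : ℕ} {F F' : ℝ → ℝ}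

lemma hasDerivAt_div_sub_pow (hm : m ≠ 0) {s : ℝ} (hs : a < s) :
    HasDerivAt (fun t => c / (m * (t - a) ^ m)) (-c / (s - a) ^ (m + 1)) s := by
  have hx : s - a ≠ 0 := sub_ne_zero.2 hs.ne'
  have h := (hasDerivAt_const s c).div
    ((((hasDerivAt_id s).sub_const a).pow m).const_mul (m : ℝ)) (by simp [hx, hm])
  refine h.congr_deriv ?_
  obtain ⟨n, rfl⟩ := Nat.exists_eq_succ_of_ne_zero hm
  simp only [id, Nat.succ_sub_one, Pi.pow_apply, Nat.succ_eq_add_one]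
  field_simp
  ring

lemma eventually_lt_pow_mul_of_pow_succ_mul_deriv_le (hm : m ≠ 0)
    (hF : ∀ᶠ s in 𝓝[>] a, HasDerivAt F (F' s) s)
    (hF' : ∀ᶠ s in 𝓝[>] a, (s - a) ^ (m + 1) * F' s ≤ c) (hl : l < -c / m) :
    ∀ᶠ s in 𝓝[>] a, l < (s - a) ^ m * F s := by
  obtain ⟨δ, haδ, hδ⟩ := mem_nhdsGT_iff_exists_Ioc_subset.mp (hF.and hF')
  set G := fun s => F s + c / (m * (s - a) ^ m)
  have hG : ∀ s ∈ Ioc a δ, HasDerivAt G (F' s - c / (s - a) ^ (m + 1)) s := fun s hs =>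
    ((hδ hs).1.add (hasDerivAt_div_sub_pow hm hs.1)).congr_deriv (by ring)
  have hG_anti : AntitoneOn G (Ioc a δ) := by
    refine antitoneOn_of_hasDerivWithinAt_nonpos (convex_Ioc a δ)
      (fun s hs => (hG s hs).continuousAt.continuousWithinAt)
      (fun s hs => (hG s (interior_subset hs)).hasDerivWithinAt) fun s hs => ?_
    have hs' := interior_subset hs
    have hpos : 0 < (s - a) ^ (m + 1) := pow_pos (sub_pos.2 hs'.1) _
    rw [sub_nonpos, le_div_iff₀ hpos, mul_comm]
    exact (hδ hs').2
  have hlim : Tendsto (fun s => (s - a) ^ m * G δ - c / m) (𝓝[>] a) (𝓝 (-c / m)) := by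
    have : ContinuousAt (fun s => (s - a) ^ m * G δ - c / m) a := by fun_prop
    simpa [zero_pow hm, neg_div] using this.tendsto.mono_left nhdsWithin_le_nhds
  filter_upwards [hlim.eventually (lt_mem_nhds hl), Ioo_mem_nhdsGT haδ] with s hls hs
  have hpos : 0 < (s - a) ^ m := pow_pos (sub_pos.2 hs.1) m
  calc l < (s - a) ^ m * G δ - c / m := hls
    _ ≤ (s - a) ^ m * G s - c / m := by
      gcongr
      exact hG_anti ⟨hs.1, hs.2.le⟩ ⟨haδ, le_rfl⟩ hs.2.le
    _ = (s - a) ^ m * F s := by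
      simp only [G]
      field_simp
      ring

theorem tendsto_pow_mul_of_tendsto_pow_succ_mul_deriv (hm : m ≠ 0)
    (hF : ∀ᶠ s in 𝓝[>] a, HasDerivAt F (F' s) s)
    (hL : Tendsto (fun s => (s - a) ^ (m + 1) * F' s) (𝓝[>] a) (𝓝 L)) :
    Tendsto (fun s => (s - a) ^ m * F s) (𝓝[>] a) (𝓝 (-L / m)) := by
  have hm' : (0 : ℝ) < m := by positivity
  refine tendsto_order.2 ⟨fun l hl => ?_, fun l hl => ?_⟩
  · obtain ⟨c, hLc, hcl⟩ : ∃ c, L < c ∧ c < -l * m :=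
      exists_between (by linarith [(lt_div_iff₀ hm').1 hl])
    refine eventually_lt_pow_mul_of_pow_succ_mul_deriv_le hm hF
      ((hL.eventually (gt_mem_nhds hLc)).mono fun s hs => hs.le) ?_
    exact (lt_div_iff₀ hm').2 (by linarith)
  · obtain ⟨c, hLc, hcl⟩ : ∃ c, -L < c ∧ c < l * m := exists_between ((div_lt_iff₀ hm').1 hl)
    have hnegF' := (hL.neg.eventually (gt_mem_nhds hLc)).mono fun s hs => hs.le
    have hnegF := eventually_lt_pow_mul_of_pow_succ_mul_deriv_le (l := -l) hm
      (hF.mono fun s hs => hs.neg) (by simpa only [mul_neg] using hnegF')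
      (by rwa [neg_div, neg_lt_neg_iff, div_lt_iff₀ hm'])
    filter_upwards [hnegF] with s hs
    simpa [mul_neg, neg_lt_neg_iff] using hs

end

theorem multiple_root_essential_singularity_general (rH b : ℝ) (hb : rH < b)
    (k : ℕ) (hk : 2 ≤ k) (μ C : ℝ) (hμ : μ ≠ 0) (hC : C ≠ 0)
    (f g : ℝ → ℝ)
    (hfg : ∀ s ∈ Set.Ico rH b, f s = (s - rH) ^ k * g s)
    (hg : ContinuousOn g (Set.Ico rH b)) (hgC : g rH = C)
    (u : ℝ → ℝ) (hupos : ∀ s ∈ Set.Ioo rH b, 0 < u s)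
    (hud : ∀ s ∈ Set.Ioo rH b, DifferentiableAt ℝ u s)
    (hode : ∀ s ∈ Set.Ioo rH b, f s * deriv u s = μ * u s) :
    Filter.Tendsto (fun s => (s - rH) ^ (k - 1) * Real.log (u s))
        (nhdsWithin rH (Set.Ioi rH)) (nhds (-μ / (C * ((k : ℝ) - 1)))) ∧
      -μ / (C * ((k : ℝ) - 1)) ≠ 0 := by
  have hk1 : k - 1 + 1 = k := by omega
  have hkR : ((k - 1 : ℕ) : ℝ) = (k : ℝ) - 1 := by rw [Nat.cast_sub (by omega), Nat.cast_one]
  have hIoo : Ioo rH b ∈ 𝓝[>] rH := Ioo_mem_nhdsGT hb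
  have hlog : ∀ s ∈ Ioo rH b, HasDerivAt (fun t => Real.log (u t)) (μ / f s) s := fun s hs => by
    have hfs : f s ≠ 0 :=
      left_ne_zero_of_mul ((hode s hs).trans_ne (mul_ne_zero hμ (hupos s hs).ne'))
    refine ((hud s hs).hasDerivAt.log (hupos s hs).ne').congr_deriv ?_
    rw [div_eq_div_iff (hupos s hs).ne' hfs, mul_comm, hode s hs]
  have hg_lim : Tendsto g (𝓝[>] rH) (𝓝 C) := hgC ▸
    ((hg rH ⟨le_rfl, hb⟩).mono_of_mem_nhdsWithin (mem_of_superset hIoo Ioo_subset_Ico_self)).tendsto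
  have hL : Tendsto (fun s => (s - rH) ^ (k - 1 + 1) * (μ / f s)) (𝓝[>] rH) (𝓝 (μ / C)) := by
    refine (tendsto_const_nhds.div hg_lim hC).congr' ?_
    filter_upwards [hIoo] with s hs
    show μ / g s = _
    rw [hk1, hfg s (Ioo_subset_Ico_self hs), ← mul_div_assoc,
      mul_div_mul_left _ _ (pow_ne_zero k (sub_ne_zero.2 hs.1.ne'))]
  refine ⟨?_, ?_⟩
  · convert tendsto_pow_mul_of_tendsto_pow_succ_mul_deriv (by omega)
      (eventually_of_mem hIoo hlog) hL using 2
    rw [hkR, neg_div, neg_div, div_div]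
  · have hk1R : (k : ℝ) - 1 ≠ 0 := sub_ne_zero.2 (by exact_mod_cast (by omega : k ≠ 1))
    exact div_ne_zero (neg_ne_zero.2 hμ) (mul_ne_zero hC hk1R)

/-- if `f` has a zero of order `k ≥ 2` at `r_H` and
`u : (r_H, b) → (0,∞)` solves `f·u' = μ·u`, then
`(s − r_H)^{k−1}·log u(s) → −μ/(C(k−1))` as `s → r_H⁺`, a nonzero limit,
so `u` has an essential singularity at `r_H`. -/
theorem multiple_root_essential_singularity (rH b : ℝ) (hb : rH < b)
    (k : ℕ) (hk : 2 ≤ k) (μ C : ℝ) (hμ : μ ≠ 0) (hC : C ≠ 0)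
    (f g : ℝ → ℝ)
    (hfg : ∀ s ∈ Set.Ico rH b, f s = (s - rH) ^ k * g s)
    (hg : ContinuousOn g (Set.Ico rH b)) (hgC : g rH = C)
    (hf0 : ∀ s ∈ Set.Ioo rH b, f s ≠ 0)
    (u : ℝ → ℝ) (hupos : ∀ s ∈ Set.Ioo rH b, 0 < u s)
    (hud : ∀ s ∈ Set.Ioo rH b, DifferentiableAt ℝ u s)
    (hode : ∀ s ∈ Set.Ioo rH b, f s * deriv u s = μ * u s) :
    Filter.Tendsto (fun s => (s - rH) ^ (k - 1) * Real.log (u s))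
        (nhdsWithin rH (Set.Ioi rH)) (nhds (-μ / (C * ((k : ℝ) - 1)))) ∧
      -μ / (C * ((k : ℝ) - 1)) ≠ 0 :=
  multiple_root_essential_singularity_general rH b hb k hk μ C hμ hC f g hfg hg hgC u hupos hud hode
end
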